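/- arXiv:2112.11791 — 4 statements merged into one kernel-verified Lean document; each statement's English description precedes it below -/
import Mathlib

section
/- Let f₂ : ℝ → ℝ be continuous with f₂(0) = f₂(θ) = f₂(K₂) = 0 for some 0 < θ < K₂, f₂ < 0 on (0,θ), f₂ > 0 on (θ,K₂), f₂ < 0 on (K₂,∞), and ∫_0^{K₂} f₂(s) ds = 0. Let d₂ > 0 and let U : [0,∞) → ℝ be a C² solution of d₂·U'' + f₂(U) = 0 on [0,∞) with U > 0, U(0) > 0, U(+∞) = 0, U'(+∞) = 0, and assume f₂ is locally Lipschitz. If there exists x₀ ≥ 0 with U(x₀) = K₂, then U ≡ K₂ on [0,∞), contradicting U(+∞) = 0; hence 0 < U < K₂ on [0,∞). -/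
/-!
Along a solution the energy `d₂ / 2 * U' ^ 2 + ∫₀^U f₂` is conserved and tends to `0` at
infinity, so it vanishes identically. If `U x ≥ K₂` somewhere, then `U` takes the value `K₂` at
some later point (as `U → 0`), where the balanced mass condition `∫₀^K₂ f₂ = 0` forces `U' = 0`.
Since `(K₂, 0)` is an equilibrium of the locally Lipschitz phase-plane system
`(U, U')' = (U', -f₂ U / d₂)`, uniqueness keeps `U ≡ K₂` from then on, contradicting `U → 0`.
-/

open Filter Set Topology

theorem ODE_solution_eq_equilibrium {E : Type*} [NormedAddCommGroup E] [NormedSpace ℝ E]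
    {v : E → E} (hv : LocallyLipschitz v) {x₀ : E} (hx₀ : v x₀ = 0)
    {f : ℝ → E} {a : ℝ} (hf : ∀ t ≥ a, HasDerivAt f (v (f t)) t) (ha : f a = x₀) :
    ∀ t ≥ a, f t = x₀ := by
  intro b hb
  have hcont : ContinuousOn f (Icc a b) := fun t ht => (hf t ht.1).continuousAt.continuousWithinAt
  obtain ⟨K, hK⟩ := LocallyLipschitzOn.exists_lipschitzOnWith_of_compact
    (isCompact_Icc.image_of_continuousOn hcont) hv.locallyLipschitzOn
  refine ODE_solution_unique_of_mem_Icc_right (fun _ _ => hK) hcont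
    (fun t ht => (hf t ht.1).hasDerivWithinAt)
    (fun t ht => mem_image_of_mem f (Ico_subset_Icc_self ht)) continuousOn_const (fun t _ => ?_)
    (fun _ _ => ha ▸ mem_image_of_mem f ⟨le_rfl, hb⟩) ha ⟨hb, le_rfl⟩
  simpa [hx₀] using hasDerivWithinAt_const t (Ici t) x₀

theorem secondOrder_ODE_solution_eq_equilibrium {g : ℝ → ℝ} (hg : LocallyLipschitz g) {c : ℝ}
    (hc : g c = 0) {U U' : ℝ → ℝ} {a : ℝ} (hU : ∀ x ≥ a, HasDerivAt U (U' x) x)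
    (hU' : ∀ x ≥ a, HasDerivAt U' (g (U x)) x) (hUa : U a = c) (hU'a : U' a = 0) :
    ∀ x ≥ a, U x = c := by
  have hv : LocallyLipschitz fun p : ℝ × ℝ => (p.2, g p.1) :=
    LipschitzWith.prod_snd.locallyLipschitz.prodMk
      (hg.comp LipschitzWith.prod_fst.locallyLipschitz)
  intro x hx
  have hphase := ODE_solution_eq_equilibrium hv (x₀ := (c, 0)) (by simp [hc])
    (f := fun x => (U x, U' x)) (fun t ht => (hU t ht).prodMk (hU' t ht)) (by simp [hUa, hU'a])
    x hx
  exact congrArg Prod.fst hphase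

section Energy

variable {f : ℝ → ℝ} {d : ℝ} {U U' U'' : ℝ → ℝ} {a : ℝ}

theorem hasDerivAt_energy (hf : Continuous f) {x : ℝ} (hU : HasDerivAt U (U' x) x)
    (hU' : HasDerivAt U' (U'' x) x) (hode : d * U'' x + f (U x) = 0) :
    HasDerivAt (fun y => d / 2 * U' y ^ 2 + ∫ s in (0:ℝ)..U y, f s) 0 x := by
  have hF : HasDerivAt (fun u => ∫ s in (0:ℝ)..u, f s) (f (U x)) (U x) :=
    intervalIntegral.integral_hasDerivAt_right (hf.intervalIntegrable _ _)
      (hf.stronglyMeasurableAtFilter _ _) hf.continuousAt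
  refine (((hU'.pow 2).const_mul (d / 2)).add (hF.comp x hU)).congr_deriv ?_
  linear_combination U' x * hode

theorem energy_eq_zero_of_tendsto (hf : Continuous f) (hU : ∀ x ≥ a, HasDerivAt U (U' x) x)
    (hU' : ∀ x ≥ a, HasDerivAt U' (U'' x) x) (hode : ∀ x ≥ a, d * U'' x + f (U x) = 0)
    (hUlim : Tendsto U atTop (𝓝 0)) (hU'lim : Tendsto U' atTop (𝓝 0)) :
    ∀ x ≥ a, d / 2 * U' x ^ 2 + ∫ s in (0:ℝ)..U x, f s = 0 := by
  set E := fun y => d / 2 * U' y ^ 2 + ∫ s in (0:ℝ)..U y, f s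
  have hE : ∀ x ≥ a, HasDerivAt E 0 x := fun x hx =>
    hasDerivAt_energy hf (hU x hx) (hU' x hx) (hode x hx)
  have hElim : Tendsto E atTop (𝓝 0) := by
    have hF : Continuous fun u => ∫ s in (0:ℝ)..u, f s :=
      intervalIntegral.continuous_primitive (fun _ _ => hf.intervalIntegrable _ _) 0
    simpa using ((hU'lim.pow 2).const_mul (d / 2)).add ((hF.tendsto 0).comp hUlim)
  intro x hx
  have hconst : ∀ y ≥ x, E y = E x := fun y hy =>
    constant_of_has_deriv_right_zero
      (fun t ht => (hE t (hx.trans ht.1)).continuousAt.continuousWithinAt)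
      (fun t ht => (hE t (hx.trans ht.1)).hasDerivWithinAt) y ⟨hy, le_rfl⟩
  exact tendsto_nhds_unique (tendsto_const_nhds.congr' <|
    (eventually_ge_atTop x).mono fun y hy => (hconst y hy).symm) hElim

end Energy

theorem balanced_bistable_below_K2_general
    (f₂ : ℝ → ℝ) (hf₂c : Continuous f₂) (hflip : LocallyLipschitz f₂)
    (θ K₂ : ℝ) (hθ : 0 < θ) (hθK : θ < K₂)
    (hf₂K : f₂ K₂ = 0)
    (hmass : (∫ s in (0:ℝ)..K₂, f₂ s) = 0)
    (d₂ : ℝ) (hd₂ : 0 < d₂)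
    (U U' U'' : ℝ → ℝ)
    (hU' : ∀ x ≥ (0:ℝ), HasDerivAt U (U' x) x)
    (hU'' : ∀ x ≥ (0:ℝ), HasDerivAt U' (U'' x) x)
    (hode : ∀ x ≥ (0:ℝ), d₂ * U'' x + f₂ (U x) = 0)
    (hUpos : ∀ x ≥ (0:ℝ), 0 < U x)
    (hUlim : Tendsto U atTop (nhds 0))
    (hU'lim : Tendsto U' atTop (nhds 0)) :
    ∀ x ≥ (0:ℝ), 0 < U x ∧ U x < K₂ := by
  intro x hx
  have hK₂ : 0 < K₂ := hθ.trans hθK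
  refine ⟨hUpos x hx, not_le.mp fun hKx => ?_⟩
  obtain ⟨x₀, hxx₀, hUx₀⟩ : ∃ x₀ ∈ Ici x, U x₀ = K₂ :=
    isPreconnected_Ici.intermediate_value_Ioc self_mem_Ici
      (le_principal_iff.mpr (Ici_mem_atTop x))
      (fun t ht => (hU' t (hx.trans ht)).continuousAt.continuousWithinAt) hUlim ⟨hK₂, hKx⟩
  have hx₀ : 0 ≤ x₀ := hx.trans hxx₀
  have hU'x₀ : U' x₀ = 0 := by
    have h := energy_eq_zero_of_tendsto hf₂c hU' hU'' hode hUlim hU'lim x₀ hx₀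
    rw [hUx₀, hmass, add_zero] at h
    simpa [hd₂.ne'] using h
  have hsecond : ∀ y ≥ 0, HasDerivAt U' (-d₂⁻¹ * f₂ (U y)) y := fun y hy =>
    (hU'' y hy).congr_deriv (by field_simp; linarith [hode y hy])
  have hU_eq : ∀ y ≥ x₀, U y = K₂ :=
    secondOrder_ODE_solution_eq_equilibrium
      ((lipschitzWith_smul (-d₂⁻¹)).locallyLipschitz.comp hflip) (by simp [hf₂K])
      (fun y hy => hU' y (hx₀.trans hy)) (fun y hy => hsecond y (hx₀.trans hy))
      hUx₀ hU'x₀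
  have hUK₂ : Tendsto U atTop (𝓝 K₂) :=
    tendsto_const_nhds.congr' ((eventually_ge_atTop x₀).mono fun y hy => (hU_eq y hy).symm)
  exact hK₂.ne' (tendsto_nhds_unique hUK₂ hUlim)

/-- Balanced bistable case: a positive solution of `d₂U'' + f₂(U) = 0` on `[0,∞)`
decaying at `+∞` satisfies `0 < U < K₂` on `[0,∞)`. -/
theorem balanced_bistable_below_K2
    (f₂ : ℝ → ℝ) (hf₂c : Continuous f₂) (hflip : LocallyLipschitz f₂)
    (θ K₂ : ℝ) (hθ : 0 < θ) (hθK : θ < K₂)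
    (hf₂0 : f₂ 0 = 0) (hf₂θ : f₂ θ = 0) (hf₂K : f₂ K₂ = 0)
    (hf₂neg : ∀ s ∈ Set.Ioo (0:ℝ) θ, f₂ s < 0)
    (hf₂pos : ∀ s ∈ Set.Ioo θ K₂, 0 < f₂ s)
    (hf₂neg' : ∀ s ∈ Set.Ioi K₂, f₂ s < 0)
    (hmass : (∫ s in (0:ℝ)..K₂, f₂ s) = 0)
    (d₂ : ℝ) (hd₂ : 0 < d₂)
    (U U' U'' : ℝ → ℝ)
    (hU' : ∀ x ≥ (0:ℝ), HasDerivAt U (U' x) x)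
    (hU'' : ∀ x ≥ (0:ℝ), HasDerivAt U' (U'' x) x)
    (hode : ∀ x ≥ (0:ℝ), d₂ * U'' x + f₂ (U x) = 0)
    (hUpos : ∀ x ≥ (0:ℝ), 0 < U x) (hU0 : 0 < U 0)
    (hUlim : Tendsto U atTop (nhds 0))
    (hU'lim : Tendsto U' atTop (nhds 0)) :
    ∀ x ≥ (0:ℝ), 0 < U x ∧ U x < K₂ :=
  balanced_bistable_below_K2_general f₂ hf₂c hflip θ K₂ hθ hθK hf₂K hmass d₂ hd₂ U U' U'' hU' hU''
    hode hUpos hUlim hU'lim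
end

section
/- Let d > 0, f : ℝ → ℝ continuous with f(0) = 0 and f'(0) > 0 (f differentiable at 0). Let R > 0 satisfy π/(2R) ≤ √(f'(0)/(2d)), and define Ψ(x) = cos(πx/(2R)) for |x| ≤ R. Then there exists ε̃ > 0 such that for all ε ∈ (0, ε̃] and all x ∈ (-R, R), -d·(εΨ)''(x) < f(ε·Ψ(x)). -/
/-!
With `c = π / (2R)`, the bump satisfies `-d (εΨ)'' = d c² εΨ ≤ (f'(0)/2) εΨ`, while
`f(s) > (f'(0)/2) s` for all small `s > 0` because the slope of `f` at `0` tends to `f'(0)`.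
Since `0 < εΨ(x) ≤ ε` on `(-R, R)`, any `ε` below that smallness threshold works.
-/

open Real Filter Set Topology

theorem eventually_mul_lt_of_hasDerivAt_zero {f : ℝ → ℝ} {f' a : ℝ} (hf : HasDerivAt f f' 0)
    (hf0 : f 0 = 0) (ha : a < f') : ∀ᶠ s in 𝓝[>] 0, a * s < f s := by
  have hslope : ∀ᶠ s in 𝓝[>] 0, a < slope f 0 s :=
    (hasDerivAt_iff_tendsto_slope.mp hf).eventually (lt_mem_nhds ha)
      |>.filter_mono (nhdsWithin_mono _ fun _ hs => ne_of_gt hs)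
  filter_upwards [hslope, self_mem_nhdsWithin] with s hs (hs0 : 0 < s)
  rwa [slope_def_field, hf0, sub_zero, sub_zero, lt_div_iff₀ hs0] at hs

theorem exists_forall_Ioc_mul_lt_of_hasDerivAt_zero {f : ℝ → ℝ} {f' a : ℝ}
    (hf : HasDerivAt f f' 0) (hf0 : f 0 = 0) (ha : a < f') :
    ∃ δ > 0, ∀ s ∈ Ioc 0 δ, a * s < f s :=
  mem_nhdsGT_iff_exists_Ioc_subset.mp (eventually_mul_lt_of_hasDerivAt_zero hf hf0 ha)

theorem deriv_deriv_const_mul_cos_mul (a c x : ℝ) :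
    deriv (deriv fun y => a * cos (c * y)) x = -c ^ 2 * (a * cos (c * x)) := by
  have hlin (y : ℝ) : HasDerivAt (fun y => c * y) c y := by
    simpa using (hasDerivAt_id y).const_mul c
  have hderiv : deriv (fun y => a * cos (c * y)) = fun y => a * (-sin (c * y) * c) :=
    funext fun y => ((hlin y).cos.const_mul a).deriv
  have hsin : HasDerivAt (fun y => -sin (c * y)) (-(cos (c * x) * c)) x := (hlin x).sin.neg
  rw [hderiv, ((hsin.mul_const c).const_mul a).deriv]
  ring

theorem cos_pi_mul_div_pos {R x : ℝ} (hx : x ∈ Ioo (-R) R) : 0 < cos (π * x / (2 * R)) := by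
  have hR : 0 < R := by linarith [hx.1, hx.2]
  apply cos_pos_of_mem_Ioo
  constructor
  · rw [lt_div_iff₀ (by positivity)]; nlinarith [pi_pos, hx.1]
  · rw [div_lt_iff₀ (by positivity)]; nlinarith [pi_pos, hx.2]

theorem mul_sq_le_of_le_sqrt_div {a c d : ℝ} (hd : 0 < d) (hc : 0 < c) (h : c ≤ √(a / d)) :
    d * c ^ 2 ≤ a := by
  rw [le_sqrt' hc, le_div_iff₀ hd] at h
  linarith

theorem small_bump_subsolution_general
    (d : ℝ) (hd : 0 < d)
    (f : ℝ → ℝ) (hf0 : f 0 = 0)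
    (f0' : ℝ) (hf' : HasDerivAt f f0' 0) (hf'pos : 0 < f0')
    (R : ℝ) (hR : 0 < R) (hRbig : π / (2 * R) ≤ Real.sqrt (f0' / (2 * d))) :
    ∃ εt > (0:ℝ), ∀ ε : ℝ, 0 < ε → ε ≤ εt → ∀ x ∈ Set.Ioo (-R) R,
      -d * deriv (deriv (fun y => ε * Real.cos (π * y / (2 * R)))) x
        < f (ε * Real.cos (π * x / (2 * R))) := by
  set c := π / (2 * R)
  have hdc : d * c ^ 2 ≤ f0' / 2 := by
    refine mul_sq_le_of_le_sqrt_div hd (by positivity) ?_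
    rwa [div_div]
  obtain ⟨εt, hεt, hsmall⟩ := exists_forall_Ioc_mul_lt_of_hasDerivAt_zero hf' hf0
    (half_lt_self hf'pos)
  refine ⟨εt, hεt, fun ε hε hεle x hx => ?_⟩
  simp only [mul_div_right_comm π, deriv_deriv_const_mul_cos_mul]
  have hs : ε * cos (c * x) ∈ Ioc 0 εt :=
    ⟨mul_pos hε (by simpa [c, mul_div_right_comm π] using cos_pi_mul_div_pos hx),
      (mul_le_of_le_one_right hε.le (cos_le_one _)).trans hεle⟩
  calc -d * (-c ^ 2 * (ε * cos (c * x))) = d * c ^ 2 * (ε * cos (c * x)) := by ring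
    _ ≤ f0' / 2 * (ε * cos (c * x)) := mul_le_mul_of_nonneg_right hdc hs.1.le
    _ < f (ε * cos (c * x)) := hsmall _ hs

/-- Construction of a small stationary subsolution bump: for `Ψ(x) = cos(πx/(2R))`
and small `ε > 0`, `-d(εΨ)'' < f(εΨ)` on `(-R, R)`. -/
theorem small_bump_subsolution
    (d : ℝ) (hd : 0 < d)
    (f : ℝ → ℝ) (hfc : Continuous f) (hf0 : f 0 = 0)
    (f0' : ℝ) (hf' : HasDerivAt f f0' 0) (hf'pos : 0 < f0')
    (R : ℝ) (hR : 0 < R) (hRbig : π / (2 * R) ≤ Real.sqrt (f0' / (2 * d))) :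
    ∃ εt > (0:ℝ), ∀ ε : ℝ, 0 < ε → ε ≤ εt → ∀ x ∈ Set.Ioo (-R) R,
      -d * deriv (deriv (fun y => ε * Real.cos (π * y / (2 * R)))) x
        < f (ε * Real.cos (π * x / (2 * R))) :=
  small_bump_subsolution_general d hd f hf0 f0' hf' hf'pos R hR hRbig
end

section
/- Let f₁ : ℝ → ℝ be continuous with f₁(K₁) = 0, f₁ > 0 on (0, K₁) and f₁ < 0 on (K₁, ∞), and let f₂ : ℝ → ℝ be continuous with f₂(K₂) = 0, f₂ > 0 on (θ, K₂), f₂ < 0 on (0, θ), where 0 < θ < K₂, and ∫_ν^{K₂} f₂(s) ds > 0 for all ν ∈ (0, K₂). Let d₁, d₂, σ > 0 and suppose K₁ < K₂ and K₁ ≥ θ. Then there exists a unique ξ ∈ (K₁, K₂) such that ∫_ξ^{K₁} f₁(s) ds = (d₁σ²/d₂) · ∫_ξ^{K₂} f₂(s) ds. -/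
open Real Filter Set MeasureTheory

/-- Unique interface value `ξ ∈ (K₁, K₂)` for the stationary solution connecting
`K₁` to `K₂` in the KPP–bistable case with `K₁ < K₂` and `K₁ ≥ θ`. -/
theorem interface_value_KPP_bistable
    (f₁ f₂ : ℝ → ℝ) (hf₁c : Continuous f₁) (hf₂c : Continuous f₂)
    (d₁ d₂ σ : ℝ) (hd₁ : 0 < d₁) (hd₂ : 0 < d₂) (hσ : 0 < σ)
    (K₁ K₂ θ : ℝ) (hθ : 0 < θ) (hθK : θ < K₂)
    (hK₁pos : 0 < K₁) (hK₁₂ : K₁ < K₂) (hK₁θ : θ ≤ K₁)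
    (hf₁pos : ∀ s ∈ Set.Ioo (0:ℝ) K₁, 0 < f₁ s) (hf₁K : f₁ K₁ = 0)
    (hf₁neg : ∀ s ∈ Set.Ioi K₁, f₁ s < 0)
    (hf₂K : f₂ K₂ = 0)
    (hf₂pos : ∀ s ∈ Set.Ioo θ K₂, 0 < f₂ s)
    (hf₂neg : ∀ s ∈ Set.Ioo (0:ℝ) θ, f₂ s < 0)
    (hf₂tail : ∀ ν ∈ Set.Ioo (0:ℝ) K₂, 0 < ∫ s in ν..K₂, f₂ s) :
    ∃! ξ : ℝ, ξ ∈ Set.Ioo K₁ K₂ ∧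
      (∫ s in ξ..K₁, f₁ s) = (d₁ * σ ^ 2 / d₂) * ∫ s in ξ..K₂, f₂ s := by
  set c : ℝ := d₁ * σ ^ 2 / d₂ with hc
  have hcpos : 0 < c := by positivity
  set g : ℝ → ℝ := fun ν => (∫ s in ν..K₁, f₁ s) - c * ∫ s in ν..K₂, f₂ s with hg
  -- derivative of g
  have hderiv : ∀ x : ℝ, HasDerivAt g (-f₁ x + c * f₂ x) x := by
    intro x
    have h1 : HasDerivAt (fun ν => ∫ s in ν..K₁, f₁ s) (-f₁ x) x := by
      have h : HasDerivAt (fun u => ∫ s in K₁..u, f₁ s) (f₁ x) x :=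
        intervalIntegral.integral_hasDerivAt_right (hf₁c.intervalIntegrable _ _)
          (hf₁c.stronglyMeasurableAtFilter _ _) hf₁c.continuousAt
      simpa [intervalIntegral.integral_symm K₁, Pi.neg_def] using h.neg
    have h2 : HasDerivAt (fun ν => ∫ s in ν..K₂, f₂ s) (-f₂ x) x := by
      have h : HasDerivAt (fun u => ∫ s in K₂..u, f₂ s) (f₂ x) x :=
        intervalIntegral.integral_hasDerivAt_right (hf₂c.intervalIntegrable _ _)
          (hf₂c.stronglyMeasurableAtFilter _ _) hf₂c.continuousAt
      simpa [intervalIntegral.integral_symm K₂, Pi.neg_def] using h.neg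
    have := h1.sub (h2.const_mul c)
    simpa [hg, mul_comm, mul_neg, sub_neg_eq_add, Pi.sub_def] using this
  have hgdiff : Differentiable ℝ g := fun x => (hderiv x).differentiableAt
  have hgc : Continuous g := hgdiff.continuous
  -- g is strictly monotone on [K₁, K₂]
  have hmono : StrictMonoOn g (Set.Icc K₁ K₂) := by
    apply strictMonoOn_of_deriv_pos (convex_Icc _ _) hgc.continuousOn
    intro x hx
    rw [interior_Icc] at hx
    rw [(hderiv x).deriv]
    have h1 : f₁ x < 0 := hf₁neg x hx.1
    have h2 : 0 < f₂ x := hf₂pos x ⟨lt_of_le_of_lt hK₁θ hx.1, hx.2⟩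
    nlinarith
  -- g K₁ < 0
  have hgK₁ : g K₁ < 0 := by
    have h2 : 0 < ∫ s in K₁..K₂, f₂ s := hf₂tail K₁ ⟨hK₁pos, hK₁₂⟩
    have : (∫ s in K₁..K₁, f₁ s) = 0 := intervalIntegral.integral_same
    simp only [hg, this]
    nlinarith
  -- g K₂ > 0
  have hgK₂ : 0 < g K₂ := by
    have hneg : (0:ℝ) < ∫ s in K₁..K₂, -f₁ s := by
      apply intervalIntegral.intervalIntegral_pos_of_pos_on
        ((hf₁c.neg).intervalIntegrable _ _)
      · intro x hx
        simpa using hf₁neg x hx.1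
      · exact hK₁₂
    rw [intervalIntegral.integral_neg] at hneg
    have h1 : (∫ s in K₂..K₁, f₁ s) = -∫ s in K₁..K₂, f₁ s :=
      intervalIntegral.integral_symm _ _
    have h2 : (∫ s in K₂..K₂, f₂ s) = 0 := intervalIntegral.integral_same
    simp only [hg, h1, h2]
    nlinarith
  -- existence via IVT
  obtain ⟨ξ, hξmem, hξ0⟩ : ∃ ξ ∈ Set.Ioo K₁ K₂, g ξ = 0 := by
    have := intermediate_value_Ioo (le_of_lt hK₁₂) hgc.continuousOn
      (a := K₁) (b := K₂) (Set.mem_Ioo.mpr ⟨hgK₁, hgK₂⟩)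
    obtain ⟨ξ, hξ, hgξ⟩ := this
    exact ⟨ξ, hξ, hgξ⟩
  refine ⟨ξ, ⟨hξmem, ?_⟩, ?_⟩
  · have := sub_eq_zero.mp hξ0
    simpa [hc] using this
  · rintro y ⟨hymem, hyeq⟩
    have hy0 : g y = 0 := by
      simp only [hg]
      rw [hyeq]
      ring
    have hymem' : y ∈ Set.Icc K₁ K₂ := Set.mem_Icc_of_Ioo hymem
    have hξmem' : ξ ∈ Set.Icc K₁ K₂ := Set.mem_Icc_of_Ioo hξmem
    exact hmono.injOn hymem' hξmem' (by rw [hy0, hξ0])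
end

section
/- Take d₁ = d₂ = σ = 1, f₁(u) = u(4 - u), f₂(u) = u(4 - u)(u - 1) (so K₁ = K₂ = 4, θ = 1). Then there is no ξ ∈ (0, 4] simultaneously satisfying ∫_0^ξ f₂(s) ds ≤ 0, ∫_ξ^4 f₁(s) ds = -∫_0^ξ f₂(s) ds, and ξ ≤ θ*, where θ* ∈ (1,4) is the unique number in (1,4) with ∫_0^{θ*} f₂(s) ds = 0. -/
/-!
With `f₁(u) = u(4 - u)` and `f₂(u) = u(4 - u)(u - 1)`, the two sides of the matching
equation differ by `∫_ξ^4 f₁ + ∫_0^ξ f₂ = 32/3 - (ξ(4 - ξ))²/4`. On `[0, 4]` we have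
`0 ≤ ξ(4 - ξ) ≤ 4`, so this is at least `20/3 > 0` and the matching equation has no
solution there.
-/

open Set

lemma integral_zero_mul_four_sub_mul_sub_one (ξ : ℝ) :
    (∫ s in (0:ℝ)..ξ, s * (4 - s) * (s - 1)) = -ξ ^ 4 / 4 + 5 * ξ ^ 3 / 3 - 2 * ξ ^ 2 := by
  rw [intervalIntegral.integral_eq_sub_of_hasDerivAt
    (f := fun s : ℝ => -s ^ 4 / 4 + 5 * s ^ 3 / 3 - 2 * s ^ 2)]
  · ring
  · intro x _
    convert (((hasDerivAt_pow 4 x).neg.div_const 4).add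
      (((hasDerivAt_pow 3 x).const_mul 5).div_const 3)).sub
      ((hasDerivAt_pow 2 x).const_mul 2) using 1
    · ext; simp
    · push_cast; ring
  · exact (by fun_prop : Continuous fun s : ℝ => s * (4 - s) * (s - 1)).intervalIntegrable _ _

lemma integral_mul_four_sub_four (ξ : ℝ) :
    (∫ s in ξ..(4:ℝ), s * (4 - s)) = 32 / 3 - 2 * ξ ^ 2 + ξ ^ 3 / 3 := by
  rw [intervalIntegral.integral_eq_sub_of_hasDerivAt (f := fun s : ℝ => 2 * s ^ 2 - s ^ 3 / 3)]
  · ring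
  · intro x _
    convert ((hasDerivAt_pow 2 x).const_mul 2).sub ((hasDerivAt_pow 3 x).div_const 3) using 1
    · ext; simp
    · push_cast; ring
  · exact (by fun_prop : Continuous fun s : ℝ => s * (4 - s)).intervalIntegrable _ _

lemma integral_mul_four_sub_four_add_integral_zero (ξ : ℝ) :
    (∫ s in ξ..(4:ℝ), s * (4 - s)) + (∫ s in (0:ℝ)..ξ, s * (4 - s) * (s - 1)) =
      32 / 3 - (ξ * (4 - ξ)) ^ 2 / 4 := by
  rw [integral_mul_four_sub_four, integral_zero_mul_four_sub_mul_sub_one]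
  ring

lemma sq_mul_four_sub_le {ξ : ℝ} (hξ : ξ ∈ Icc (0:ℝ) 4) : (ξ * (4 - ξ)) ^ 2 ≤ 16 := by
  have h_nonneg : 0 ≤ ξ * (4 - ξ) := mul_nonneg hξ.1 (sub_nonneg.2 hξ.2)
  have h_le : ξ * (4 - ξ) ≤ 4 := by nlinarith [sq_nonneg (ξ - 2)]
  nlinarith

/-- Explicit nonexistence example: with `d₁ = d₂ = σ = 1`, `f₁(u) = u(4-u)`,
`f₂(u) = u(4-u)(u-1)`, the matching conditions for a stationary solution
connecting `K₁ = 4` to `0` are incompatible. -/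
theorem no_matching_value_explicit_example :
    ∀ θs : ℝ, θs ∈ Set.Ioo (1:ℝ) 4 →
      (∫ s in (0:ℝ)..θs, s * (4 - s) * (s - 1)) = 0 →
      ¬ ∃ ξ : ℝ, ξ ∈ Set.Ioc (0:ℝ) 4 ∧
        (∫ s in (0:ℝ)..ξ, s * (4 - s) * (s - 1)) ≤ 0 ∧
        (∫ s in ξ..4, s * (4 - s)) = -(∫ s in (0:ℝ)..ξ, s * (4 - s) * (s - 1)) ∧
        ξ ≤ θs := by
  rintro θs - - ⟨ξ, hξ, -, hmatch, -⟩
  have hsum := integral_mul_four_sub_four_add_integral_zero ξ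
  rw [hmatch, neg_add_cancel] at hsum
  linarith [sq_mul_four_sub_le (Ioc_subset_Icc_self hξ)]
end
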